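/- arXiv:2302.11706 — 2 statements merged into one kernel-verified Lean document; each statement's English description precedes it below -/
import Mathlib

section
/- Let Ω ⊆ ℝ³ be an open set star-shaped with respect to the origin, and let w_0 : Ω → ℝ be harmonic. Define \vec{U}[w_0](x) = ∫₀¹ t x × ∇w_0(tx) dt. Then the quaternion-valued function w_0 + \vec{U}[w_0] is left-monogenic in Ω, i.e., D(w_0 + \vec{U}[w_0]) = 0. -/
open MeasureTheory Real
open scoped ENNReal

noncomputable section

/-- ℝ³ as a Euclidean (Hilbert) space. -/
abbrev V3 : Type := EuclideanSpace ℝ (Fin 3)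

/-- Build a vector in ℝ³ from components. -/
def vec3 (v : Fin 3 → ℝ) : V3 := (WithLp.equiv 2 (Fin 3 → ℝ)).symm v

/-- Cross product on ℝ³. -/
def cross3 (a b : V3) : V3 :=
  vec3 ![a 1 * b 2 - a 2 * b 1, a 2 * b 0 - a 0 * b 2, a 0 * b 1 - a 1 * b 0]

/-- Partial derivative in the i-th coordinate direction. -/
def pd (i : Fin 3) (f : V3 → ℝ) (x : V3) : ℝ :=
  fderiv ℝ f x (EuclideanSpace.single i 1)

/-- Divergence of a vector field on ℝ³. -/
def div3 (w : V3 → V3) (x : V3) : ℝ :=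
  ∑ i, fderiv ℝ w x (EuclideanSpace.single i 1) i

/-- Curl of a vector field on ℝ³. -/
def curl3 (w : V3 → V3) (x : V3) : V3 :=
  vec3 ![pd 1 (fun y => w y 2) x - pd 2 (fun y => w y 1) x,
     pd 2 (fun y => w y 0) x - pd 0 (fun y => w y 2) x,
     pd 0 (fun y => w y 1) x - pd 1 (fun y => w y 0) x]

/-- Laplacian of a scalar function on ℝ³. -/
def lap3 (f : V3 → ℝ) (x : V3) : ℝ :=
  ∑ i, pd i (pd i f) x

/-- The purely imaginary quaternion associated with a vector in ℝ³. -/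
def quatVec (v : V3) : Quaternion ℝ := ⟨0, v 0, v 1, v 2⟩

/-- Vector part of a quaternion-valued function as an ℝ³-valued field. -/
def vecPart (w : V3 → Quaternion ℝ) (x : V3) : V3 :=
  vec3 ![(w x).imI, (w x).imJ, (w x).imK]

/-- The Moisil–Teodorescu operator D = e₁∂₁ + e₂∂₂ + e₃∂₃ (left quaternionic
multiplication by the basis vectors). -/
def MT (w : V3 → Quaternion ℝ) (x : V3) : Quaternion ℝ :=
  ∑ i : Fin 3, quatVec (EuclideanSpace.single i 1) * fderiv ℝ w x (EuclideanSpace.single i 1)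

/-- Ω is star-shaped with respect to the origin. -/
def StarShaped0 (Ω : Set V3) : Prop :=
  ∀ x ∈ Ω, ∀ t : ℝ, t ∈ Set.Icc (0:ℝ) 1 → t • x ∈ Ω

/-- The monogenic completion operator U[u₀](x) = ∫₀¹ t x × ∇u₀(tx) dt. -/
def Uop (u0 : V3 → ℝ) (x : V3) : V3 :=
  ∫ t in (0:ℝ)..1, cross3 (t • x) (gradient u0 (t • x))

/-- The Cauchy kernel E(x) = -x/(4π|x|³). -/
def Ekernel (x : V3) : V3 := (-(4 * π * ‖x‖ ^ 3)⁻¹) • x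

/-- Scalar part of the Teodorescu transform. -/
def T0op (Ω : Set V3) (g : V3 → V3) (x : V3) : ℝ :=
  ∫ y in Ω, (inner ℝ (Ekernel (y - x)) (g y) : ℝ)

/-- The component T₁ of the Teodorescu transform. -/
def T1op (Ω : Set V3) (g0 : V3 → ℝ) (x : V3) : V3 :=
  -∫ y in Ω, g0 y • Ekernel (y - x)

/-- The component T₂ of the Teodorescu transform. -/
def T2op (Ω : Set V3) (g : V3 → V3) (x : V3) : V3 :=
  -∫ y in Ω, cross3 (Ekernel (y - x)) (g y)

/-- The Newton potential on Ω (scalar version). -/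
def NewtonS (Ω : Set V3) (u : V3 → ℝ) (x : V3) : ℝ :=
  -(4 * π)⁻¹ * ∫ y in Ω, u y / ‖x - y‖

/-- The Newton potential on Ω (componentwise vector version). -/
def NewtonV (Ω : Set V3) (g : V3 → V3) (x : V3) : V3 :=
  (-(4 * π)⁻¹) • ∫ y in Ω, ‖x - y‖⁻¹ • g y

/-- The right inverse of curl, R_Ω = T₂ - U ∘ T₀. -/
def Rop (Ω : Set V3) (g : V3 → V3) (x : V3) : V3 :=
  T2op Ω g x - Uop (T0op Ω g) x

/-- Scalar test functions: smooth, compactly supported inside Ω. -/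
def IsTest (Ω : Set V3) (φ : V3 → ℝ) : Prop :=
  ContDiff ℝ (⊤ : ℕ∞) φ ∧ HasCompactSupport φ ∧ tsupport φ ⊆ Ω

/-- Vector test fields: smooth, compactly supported inside Ω. -/
def IsTestV (Ω : Set V3) (φ : V3 → V3) : Prop :=
  ContDiff ℝ (⊤ : ℕ∞) φ ∧ HasCompactSupport φ ∧ tsupport φ ⊆ Ω

/-- g is weakly divergence-free on Ω. -/
def WeakDivFree (Ω : Set V3) (g : V3 → V3) : Prop :=
  ∀ φ : V3 → ℝ, IsTest Ω φ → ∫ y in Ω, (inner ℝ (g y) (gradient φ y) : ℝ) = 0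

namespace Stmt2Aux

abbrev E3 (i : Fin 3) : V3 := EuclideanSpace.single i (1:ℝ)

def crossL (a : V3) : V3 →L[ℝ] V3 :=
  LinearMap.toContinuousLinearMap
    { toFun := cross3 a
      map_add' := by intro b b'; ext i; fin_cases i <;> simp [cross3, vec3] <;> ring
      map_smul' := by intro c b; ext i; fin_cases i <;> simp [cross3, vec3] <;> ring }

def crossLM : V3 →L[ℝ] V3 →L[ℝ] V3 :=
  LinearMap.toContinuousLinearMap
    { toFun := crossL
      map_add' := by
        intro a a'; ext b i
        fin_cases i <;>
          simp [crossL, cross3, vec3, LinearMap.coe_toContinuousLinearMap'] <;> ring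
      map_smul' := by
        intro c a; ext b i
        fin_cases i <;>
          simp [crossL, cross3, vec3, LinearMap.coe_toContinuousLinearMap'] <;> ring }

lemma crossLM_apply (a b : V3) : crossLM a b = cross3 a b := rfl

def quatVecL : V3 →L[ℝ] Quaternion ℝ :=
  LinearMap.toContinuousLinearMap
    { toFun := quatVec
      map_add' := by intro a b; ext <;> simp [quatVec] <;> change _ = (_ : ℝ) + _ <;> simp
      map_smul' := by intro c a; ext <;> simp [quatVec] <;> change _ = c * (_ : ℝ) <;> simp }

def coeQL : ℝ →L[ℝ] Quaternion ℝ :=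
  LinearMap.toContinuousLinearMap (Algebra.linearMap ℝ (Quaternion ℝ))

lemma coeQL_apply (r : ℝ) : coeQL r = (r : Quaternion ℝ) := rfl
lemma quatVecL_apply (v : V3) : quatVecL v = quatVec v := rfl

lemma cross3_smul_left (c : ℝ) (a b : V3) : cross3 (c • a) b = c • cross3 a b := by
  ext i; fin_cases i <;> simp [cross3, vec3] <;> ring

lemma cross3_smul_right (c : ℝ) (a b : V3) : cross3 a (c • b) = c • cross3 a b := by
  ext i; fin_cases i <;> simp [cross3, vec3] <;> ring

lemma cross3_c0 (a b : V3) : cross3 a b 0 = a 1 * b 2 - a 2 * b 1 := rfl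
lemma cross3_c1 (a b : V3) : cross3 a b 1 = a 2 * b 0 - a 0 * b 2 := rfl
lemma cross3_c2 (a b : V3) : cross3 a b 2 = a 0 * b 1 - a 1 * b 0 := rfl

def Jlin : (V3 →L[ℝ] ℝ) →ₗ[ℝ] V3 where
  toFun φ := (InnerProductSpace.toDual ℝ V3).symm φ
  map_add' φ ψ := by simp
  map_smul' c φ := by simp

noncomputable def J : (V3 →L[ℝ] ℝ) →L[ℝ] V3 := LinearMap.toContinuousLinearMap Jlin

lemma J_apply (φ : V3 →L[ℝ] ℝ) : J φ = (InnerProductSpace.toDual ℝ V3).symm φ := rfl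

lemma apply_eq_inner (u : V3) (k : Fin 3) : u k = (inner ℝ u (E3 k) : ℝ) := by
  rw [EuclideanSpace.inner_single_right]; simp

lemma decomp (v : V3) : v = v 0 • E3 0 + v 1 • E3 1 + v 2 • E3 2 := by
  ext i; fin_cases i <;> simp [EuclideanSpace.single_apply, Fin.ext_iff]

@[simp] lemma E3_00 : E3 0 0 = 1 := by simp [EuclideanSpace.single_apply]
@[simp] lemma E3_01 : E3 0 1 = 0 := by simp [EuclideanSpace.single_apply]
@[simp] lemma E3_02 : E3 0 2 = 0 := by simp [EuclideanSpace.single_apply]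
@[simp] lemma E3_10 : E3 1 0 = 0 := by simp [EuclideanSpace.single_apply]
@[simp] lemma E3_11 : E3 1 1 = 1 := by simp [EuclideanSpace.single_apply]
@[simp] lemma E3_12 : E3 1 2 = 0 := by simp [EuclideanSpace.single_apply]
@[simp] lemma E3_20 : E3 2 0 = 0 := by simp [EuclideanSpace.single_apply]
@[simp] lemma E3_21 : E3 2 1 = 0 := by simp [EuclideanSpace.single_apply]
@[simp] lemma E3_22 : E3 2 2 = 1 := by simp [EuclideanSpace.single_apply]

@[simp] lemma quatVec_re (v : V3) : (quatVec v).re = 0 := rfl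
@[simp] lemma quatVec_imI (v : V3) : (quatVec v).imI = v 0 := rfl
@[simp] lemma quatVec_imJ (v : V3) : (quatVec v).imJ = v 1 := rfl
@[simp] lemma quatVec_imK (v : V3) : (quatVec v).imK = v 2 := rfl

lemma clm_decomp (B : V3 →L[ℝ] V3) (v : V3) (a : Fin 3) :
    B v a = v 0 * B (E3 0) a + v 1 * B (E3 1) a + v 2 * B (E3 2) a := by
  conv_lhs => rw [decomp v]
  simp [mul_comm]

/-- auxiliary: the parametric integrand -/
noncomputable def Fm (w0 : V3 → ℝ) (z : V3) (t : ℝ) : V3 :=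
  t • cross3 z (gradient w0 (t • z))

noncomputable def Fm' (w0 : V3 → ℝ) (z : V3) (t : ℝ) : V3 →L[ℝ] V3 :=
  t • (crossLM.flip (gradient w0 (t • z)) +
    t • ((crossLM z).comp (fderiv ℝ (gradient w0) (t • z))))

lemma Fm'_apply (w0 : V3 → ℝ) (z : V3) (t : ℝ) (v : V3) :
    Fm' w0 z t v = t • (cross3 v (gradient w0 (t • z)) +
      t • cross3 z (fderiv ℝ (gradient w0) (t • z) v)) := by
  simp [Fm', crossLM_apply]

end Stmt2Aux

set_option maxHeartbeats 1000000 in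
open Stmt2Aux in
/-- If Ω ⊆ ℝ³ is open, star-shaped w.r.t. the origin, and w₀ is harmonic
in Ω, then w₀ + U[w₀] is left-monogenic in Ω, with U[w₀](x) = ∫₀¹ t x × ∇w₀(tx) dt. -/
theorem stmt2 (Ω : Set V3) (hΩ : IsOpen Ω) (hstar : StarShaped0 Ω)
    (w0 : V3 → ℝ) (hsm : ContDiffOn ℝ 2 w0 Ω) (hharm : ∀ x ∈ Ω, lap3 w0 x = 0) :
    ∀ x ∈ Ω, MT (fun y => ((w0 y : ℝ) : Quaternion ℝ) + quatVec (Uop w0 y)) x = 0 := by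
  intro x hx
  -- basic differentiability facts
  have hf'1 : ContDiffOn ℝ 1 (fderiv ℝ w0) Ω := hsm.fderiv_of_isOpen hΩ (by norm_num)
  have hGJ : ∀ y, gradient w0 y = J (fderiv ℝ w0 y) := fun _ => rfl
  have hG1 : ContDiffOn ℝ 1 (gradient w0) Ω := by
    exact (J.contDiff.comp_contDiffOn hf'1 : _)
  have hw0diff : ∀ y ∈ Ω, HasFDerivAt w0 (fderiv ℝ w0 y) y := by
    intro y hy
    exact ((hsm.differentiableOn (by norm_num)).differentiableAt (hΩ.mem_nhds hy)).hasFDerivAt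
  have hf'diff : ∀ y ∈ Ω, HasFDerivAt (fderiv ℝ w0) (fderiv ℝ (fderiv ℝ w0) y) y := by
    intro y hy
    exact ((hf'1.differentiableOn (by norm_num)).differentiableAt (hΩ.mem_nhds hy)).hasFDerivAt
  have hGdiff : ∀ y ∈ Ω, HasFDerivAt (gradient w0) (fderiv ℝ (gradient w0) y) y := by
    intro y hy
    exact ((hG1.differentiableOn (by norm_num)).differentiableAt (hΩ.mem_nhds hy)).hasFDerivAt
  have hGcont : ContinuousOn (gradient w0) Ω := hG1.continuousOn
  have hHcont : ContinuousOn (fderiv ℝ (gradient w0)) Ω :=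
    hG1.continuousOn_fderiv_of_isOpen hΩ (by norm_num)
  -- second derivative: components
  have Hok : ∀ y ∈ Ω, ∀ v : V3, ∀ k : Fin 3,
      fderiv ℝ (gradient w0) y v k = fderiv ℝ (fderiv ℝ w0) y v (E3 k) := by
    intro y hy v k
    have h1 : HasFDerivAt (gradient w0) (J.comp (fderiv ℝ (fderiv ℝ w0) y)) y :=
      J.hasFDerivAt.comp y (hf'diff y hy)
    rw [h1.fderiv]
    show J (fderiv ℝ (fderiv ℝ w0) y v) k = _
    rw [apply_eq_inner (J (fderiv ℝ (fderiv ℝ w0) y v)) k, J_apply]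
    exact InnerProductSpace.toDual_symm_apply
  have hsymm : ∀ y ∈ Ω, ∀ j k : Fin 3,
      fderiv ℝ (gradient w0) y (E3 j) k = fderiv ℝ (gradient w0) y (E3 k) j := by
    intro y hy j k
    rw [Hok y hy _ _, Hok y hy _ _]
    exact second_derivative_symmetric_of_eventually
      (Filter.eventually_of_mem (hΩ.mem_nhds hy) hw0diff) (hf'diff y hy) _ _
  have htr : ∀ y ∈ Ω, fderiv ℝ (gradient w0) y (E3 0) 0 + fderiv ℝ (gradient w0) y (E3 1) 1
      + fderiv ℝ (gradient w0) y (E3 2) 2 = 0 := by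
    intro y hy
    have hpd : ∀ k : Fin 3, pd k (pd k w0) y = fderiv ℝ (gradient w0) y (E3 k) k := by
      intro k
      have h2 : HasFDerivAt (pd k w0)
          ((ContinuousLinearMap.apply ℝ ℝ (E3 k)).comp (fderiv ℝ (fderiv ℝ w0) y)) y :=
        (ContinuousLinearMap.apply ℝ ℝ (E3 k)).hasFDerivAt.comp y (hf'diff y hy)
      show fderiv ℝ (pd k w0) y (E3 k) = _
      rw [h2.fderiv, Hok y hy _ _]
      rfl
    have := hharm y hy
    rw [lap3, Fin.sum_univ_three] at this
    rw [← hpd 0, ← hpd 1, ← hpd 2]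
    exact this
  -- geometric setup
  have hseg : IsCompact ((fun t : ℝ => t • x) '' Set.Icc 0 1) :=
    isCompact_Icc.image (by fun_prop)
  have hsub : (fun t : ℝ => t • x) '' Set.Icc 0 1 ⊆ Ω := by
    rintro - ⟨t, ht, rfl⟩; exact hstar x hx t ht
  obtain ⟨δ, δpos, hδ⟩ := hseg.exists_thickening_subset_open hΩ hsub
  have hεpos : (0:ℝ) < δ/2 := half_pos δpos
  have hmem : ∀ t ∈ Set.Icc (0:ℝ) 1, ∀ z ∈ Metric.closedBall x (δ/2), t • z ∈ Ω := by
    intro t ht z hz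
    apply hδ
    rw [Metric.mem_thickening_iff]
    refine ⟨t • x, ⟨t, ht, rfl⟩, ?_⟩
    have h1 : dist (t • z) (t • x) = |t| * dist z x := by
      rw [dist_smul₀, Real.norm_eq_abs]
    rw [h1]
    calc |t| * dist z x ≤ 1 * (δ/2) := by
          apply mul_le_mul (abs_le.2 ⟨by linarith [ht.1], ht.2⟩) (Metric.mem_closedBall.1 hz)
            dist_nonneg zero_le_one
      _ < δ := by linarith
  -- continuity of the integrands
  have hmapsto : Set.MapsTo (fun p : ℝ × V3 => p.1 • p.2)
      (Set.Icc (0:ℝ) 1 ×ˢ Metric.closedBall x (δ/2)) Ω := fun p hp => hmem p.1 hp.1 p.2 hp.2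
  have hsc : ContinuousOn (fun p : ℝ × V3 => p.1 • p.2)
      (Set.Icc (0:ℝ) 1 ×ˢ Metric.closedBall x (δ/2)) :=
    (continuous_fst.smul continuous_snd).continuousOn
  have hGp : ContinuousOn (fun p : ℝ × V3 => gradient w0 (p.1 • p.2))
      (Set.Icc (0:ℝ) 1 ×ˢ Metric.closedBall x (δ/2)) := hGcont.comp hsc hmapsto
  have hHp : ContinuousOn (fun p : ℝ × V3 => fderiv ℝ (gradient w0) (p.1 • p.2))
      (Set.Icc (0:ℝ) 1 ×ˢ Metric.closedBall x (δ/2)) := hHcont.comp hsc hmapsto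
  have hjoint : ContinuousOn (fun p : ℝ × V3 => Fm' w0 p.2 p.1)
      (Set.Icc (0:ℝ) 1 ×ˢ Metric.closedBall x (δ/2)) := by
    unfold Fm'
    apply ContinuousOn.smul continuous_fst.continuousOn
    apply ContinuousOn.add (crossLM.flip.continuous.comp_continuousOn hGp)
    apply ContinuousOn.smul continuous_fst.continuousOn
    exact isBoundedBilinearMap_comp.continuous.comp_continuousOn
      ((crossLM.continuous.comp continuous_snd).continuousOn.prodMk hHp)
  have hF'xcont : ContinuousOn (fun t => Fm' w0 x t) (Set.Icc (0:ℝ) 1) := by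
    have : Set.MapsTo (fun t : ℝ => (t, x)) (Set.Icc (0:ℝ) 1)
        (Set.Icc (0:ℝ) 1 ×ˢ Metric.closedBall x (δ/2)) := by
      intro t ht; exact ⟨ht, Metric.mem_closedBall_self (le_of_lt hεpos)⟩
    exact hjoint.comp (Continuous.continuousOn (by fun_prop)) this
  have hFcont : ∀ z ∈ Metric.closedBall x (δ/2),
      ContinuousOn (fun t => Fm w0 z t) (Set.Icc (0:ℝ) 1) := by
    intro z hz
    unfold Fm
    apply ContinuousOn.smul continuousOn_id
    have h1 : ContinuousOn (fun t : ℝ => gradient w0 (t • z)) (Set.Icc (0:ℝ) 1) := by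
      apply hGcont.comp (Continuous.continuousOn (by fun_prop))
      intro t ht; exact hmem t ht z hz
    exact (crossLM z).continuous.comp_continuousOn h1
  -- the bound
  obtain ⟨C, hC⟩ := (isCompact_Icc.prod (isCompact_closedBall x (δ/2))).exists_bound_of_continuousOn hjoint
  -- differentiation under the integral sign
  have hIsub : Set.uIoc (0:ℝ) 1 ⊆ Set.Icc (0:ℝ) 1 := by
    rw [Set.uIoc_of_le zero_le_one]; exact Set.Ioc_subset_Icc_self
  have hdiff : ∀ t ∈ Set.Icc (0:ℝ) 1, ∀ z ∈ Metric.ball x (δ/2),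
      HasFDerivAt (fun w => Fm w0 w t) (Fm' w0 z t) z := by
    intro t ht z hz
    have hzΩ : t • z ∈ Ω := hmem t ht z (Metric.ball_subset_closedBall hz)
    have h1 : HasFDerivAt (fun w : V3 => t • w) (t • ContinuousLinearMap.id ℝ V3) z :=
      (hasFDerivAt_id z).const_smul t
    have h2 : HasFDerivAt (fun w : V3 => gradient w0 (t • w))
        ((fderiv ℝ (gradient w0) (t • z)).comp (t • ContinuousLinearMap.id ℝ V3)) z :=
      (hGdiff _ hzΩ).comp z h1
    have h3 := (crossLM.isBoundedBilinearMap.hasFDerivAt (z, gradient w0 (t • z))).comp z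
      ((hasFDerivAt_id z).prodMk h2)
    have h4 := h3.const_smul t
    have heq : (t • ((crossLM.isBoundedBilinearMap.deriv (z, gradient w0 (t • z))).comp
        ((ContinuousLinearMap.id ℝ V3).prod
          ((fderiv ℝ (gradient w0) (t • z)).comp (t • ContinuousLinearMap.id ℝ V3))))) = Fm' w0 z t := by
      ext v i
      simp [Fm'_apply, crossLM_apply, IsBoundedBilinearMap.deriv_apply, cross3_smul_right]
      ring
    rw [heq] at h4
    exact h4
  have key : HasFDerivAt (fun z => ∫ t in (0:ℝ)..1, Fm w0 z t)
      (∫ t in (0:ℝ)..1, Fm' w0 x t) x := by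
    apply intervalIntegral.hasFDerivAt_integral_of_dominated_of_fderiv_le
      (hs := Metric.ball_mem_nhds x hεpos) (bound := fun _ => C)
    · filter_upwards [Metric.closedBall_mem_nhds x hεpos] with z hz
      exact (ContinuousOn.mono (hFcont z hz) hIsub).aestronglyMeasurable measurableSet_uIoc
    · apply ContinuousOn.intervalIntegrable
      rw [Set.uIcc_of_le zero_le_one]
      exact hFcont x (Metric.mem_closedBall_self (le_of_lt hεpos))
    · exact (hF'xcont.mono hIsub).aestronglyMeasurable measurableSet_uIoc
    · apply Filter.Eventually.of_forall
      intro t ht z hz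
      exact hC (t, z) ⟨hIsub ht, Metric.ball_subset_closedBall hz⟩
    · exact intervalIntegrable_const
    · apply Filter.Eventually.of_forall
      intro t ht z hz
      exact hdiff t (hIsub ht) z hz
  have hUeq : Uop w0 = fun z => ∫ t in (0:ℝ)..1, Fm w0 z t := by
    funext z
    unfold Uop Fm
    congr 1
    funext t
    rw [cross3_smul_left]
  set L : V3 →L[ℝ] V3 := ∫ t in (0:ℝ)..1, Fm' w0 x t with hL
  -- component formulas for L
  have hF'int : IntervalIntegrable (fun t => Fm' w0 x t) volume 0 1 := by
    apply ContinuousOn.intervalIntegrable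
    rw [Set.uIcc_of_le zero_le_one]
    exact hF'xcont
  have hLjk : ∀ j k : Fin 3, (L (E3 j)) k = ∫ t in (0:ℝ)..1, ((Fm' w0 x t) (E3 j)) k := by
    intro j k
    have := ((EuclideanSpace.proj k).comp
      (ContinuousLinearMap.apply ℝ V3 (E3 j))).intervalIntegral_comp_comm hF'int
    exact this.symm
  have hcompint : ∀ j k : Fin 3,
      IntervalIntegrable (fun t => ((Fm' w0 x t) (E3 j)) k) volume 0 1 := by
    intro j k
    apply ContinuousOn.intervalIntegrable
    rw [Set.uIcc_of_le zero_le_one]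
    exact ((EuclideanSpace.proj k).comp
      (ContinuousLinearMap.apply ℝ V3 (E3 j))).continuous.comp_continuousOn hF'xcont
  have hUx : HasFDerivAt (Uop w0) L x := by rw [hUeq]; exact key
  have hxcb : x ∈ Metric.closedBall x (δ/2) := Metric.mem_closedBall_self (le_of_lt hεpos)
  have hxt : ∀ t ∈ Set.Icc (0:ℝ) 1, t • x ∈ Ω := fun t ht => hmem t ht x hxcb
  -- fundamental theorem of calculus for t ↦ t² ∇w0(tx)ₐ
  have hFTC : ∀ a : Fin 3,
      (∫ t in (0:ℝ)..1, (2*t*(gradient w0 (t • x) a)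
        + t^2 * ((fderiv ℝ (gradient w0) (t • x)) x a))) = gradient w0 x a := by
    intro a
    have hψ : ∀ t ∈ Set.uIcc (0:ℝ) 1, HasDerivAt (fun s : ℝ => s^2 * (gradient w0 (s • x) a))
        (2*t*(gradient w0 (t • x) a) + t^2 * ((fderiv ℝ (gradient w0) (t • x)) x a)) t := by
      intro t ht
      rw [Set.uIcc_of_le zero_le_one] at ht
      have h1 : HasDerivAt (fun s : ℝ => s • x) x t := by
        simpa using (hasDerivAt_id t).smul_const x
      have h2 : HasFDerivAt ((EuclideanSpace.proj a) ∘ (gradient w0))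
          ((EuclideanSpace.proj a).comp (fderiv ℝ (gradient w0) (t • x))) (t • x) :=
        (EuclideanSpace.proj a).hasFDerivAt.comp _ (hGdiff _ (hxt t ht))
      have h3 : HasDerivAt (fun s : ℝ => gradient w0 (s • x) a)
          (((EuclideanSpace.proj a).comp (fderiv ℝ (gradient w0) (t • x))) x) t := by
        exact h2.comp_hasDerivAt t h1
      have h4 := (hasDerivAt_pow 2 t).fun_mul h3
      exact h4.congr_deriv (by simp)
    have hg : ContinuousOn (fun t : ℝ => gradient w0 (t • x) a) (Set.Icc 0 1) :=
      (EuclideanSpace.proj a).continuous.comp_continuousOn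
        (hGcont.comp (Continuous.continuousOn (by fun_prop)) (fun t ht => hxt t ht))
    have hh : ContinuousOn (fun t : ℝ => (fderiv ℝ (gradient w0) (t • x)) x a)
        (Set.Icc 0 1) := by
      have h5 : ContinuousOn (fun t : ℝ => fderiv ℝ (gradient w0) (t • x)) (Set.Icc 0 1) :=
        hHcont.comp (Continuous.continuousOn (by fun_prop)) (fun t ht => hxt t ht)
      exact ((EuclideanSpace.proj a).comp
        (ContinuousLinearMap.apply ℝ V3 x)).continuous.comp_continuousOn h5
    have hint : IntervalIntegrable (fun t => 2*t*(gradient w0 (t • x) a)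
        + t^2 * ((fderiv ℝ (gradient w0) (t • x)) x a)) volume 0 1 := by
      apply ContinuousOn.intervalIntegrable
      rw [Set.uIcc_of_le zero_le_one]
      exact (((Continuous.continuousOn (by fun_prop)).mul hg).add
        ((Continuous.continuousOn (by fun_prop)).mul hh))
    have := intervalIntegral.integral_eq_sub_of_hasDerivAt hψ hint
    rw [this]
    norm_num
  -- explicit component formula for Fm'
  have hexp : ∀ (t : ℝ) (j k : Fin 3), ((Fm' w0 x t) (E3 j)) k
      = t * (cross3 (E3 j) (gradient w0 (t • x)) k
        + t * cross3 x ((fderiv ℝ (gradient w0) (t • x)) (E3 j)) k) := by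
    intro t j k
    rw [Fm'_apply]
    simp
    ring
  -- divergence-free fact
  have factdiv : (L (E3 0)) 0 + (L (E3 1)) 1 + (L (E3 2)) 2 = 0 := by
    rw [hLjk, hLjk, hLjk, ← intervalIntegral.integral_add (hcompint 0 0) (hcompint 1 1),
      ← intervalIntegral.integral_add ((hcompint 0 0).add (hcompint 1 1)) (hcompint 2 2)]
    have hcong : Set.EqOn (fun t => ((Fm' w0 x t) (E3 0)) 0 + ((Fm' w0 x t) (E3 1)) 1
        + ((Fm' w0 x t) (E3 2)) 2) (fun _ => (0:ℝ)) (Set.uIcc 0 1) := by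
      intro t ht
      rw [Set.uIcc_of_le zero_le_one] at ht
      have h01 := hsymm _ (hxt t ht) 0 1
      have h02 := hsymm _ (hxt t ht) 0 2
      have h12 := hsymm _ (hxt t ht) 1 2
      simp only [hexp, cross3_c0, cross3_c1, cross3_c2, E3_00, E3_01, E3_02, E3_10, E3_11,
        E3_12, E3_20, E3_21, E3_22]
      linear_combination (t*t*(x 1))*h02 - (t*t*(x 0))*h12 - (t*t*(x 2))*h01
    rw [intervalIntegral.integral_congr hcong, intervalIntegral.integral_zero]
  -- curl facts
  have fact0 : (L (E3 1)) 2 - (L (E3 2)) 1 = - gradient w0 x 0 := by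
    rw [hLjk, hLjk, ← intervalIntegral.integral_sub (hcompint 1 2) (hcompint 2 1)]
    have hcong : Set.EqOn (fun t => ((Fm' w0 x t) (E3 1)) 2 - ((Fm' w0 x t) (E3 2)) 1)
        (fun t => -(2*t*(gradient w0 (t • x) 0)
          + t^2 * ((fderiv ℝ (gradient w0) (t • x)) x 0))) (Set.uIcc 0 1) := by
      intro t ht
      rw [Set.uIcc_of_le zero_le_one] at ht
      have htr0 := htr _ (hxt t ht)
      have hdec := clm_decomp (fderiv ℝ (gradient w0) (t • x)) x 0
      simp only [hexp, cross3_c0, cross3_c1, cross3_c2, E3_00, E3_01, E3_02, E3_10, E3_11,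
        E3_12, E3_20, E3_21, E3_22, hdec]
      linear_combination (t^2 * x 0) * htr0
    rw [intervalIntegral.integral_congr hcong, intervalIntegral.integral_neg, hFTC 0]
  have fact1 : (L (E3 2)) 0 - (L (E3 0)) 2 = - gradient w0 x 1 := by
    rw [hLjk, hLjk, ← intervalIntegral.integral_sub (hcompint 2 0) (hcompint 0 2)]
    have hcong : Set.EqOn (fun t => ((Fm' w0 x t) (E3 2)) 0 - ((Fm' w0 x t) (E3 0)) 2)
        (fun t => -(2*t*(gradient w0 (t • x) 1)
          + t^2 * ((fderiv ℝ (gradient w0) (t • x)) x 1))) (Set.uIcc 0 1) := by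
      intro t ht
      rw [Set.uIcc_of_le zero_le_one] at ht
      have htr0 := htr _ (hxt t ht)
      have hdec := clm_decomp (fderiv ℝ (gradient w0) (t • x)) x 1
      simp only [hexp, cross3_c0, cross3_c1, cross3_c2, E3_00, E3_01, E3_02, E3_10, E3_11,
        E3_12, E3_20, E3_21, E3_22, hdec]
      linear_combination (t^2 * x 1) * htr0
    rw [intervalIntegral.integral_congr hcong, intervalIntegral.integral_neg, hFTC 1]
  have fact2 : (L (E3 0)) 1 - (L (E3 1)) 0 = - gradient w0 x 2 := by
    rw [hLjk, hLjk, ← intervalIntegral.integral_sub (hcompint 0 1) (hcompint 1 0)]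
    have hcong : Set.EqOn (fun t => ((Fm' w0 x t) (E3 0)) 1 - ((Fm' w0 x t) (E3 1)) 0)
        (fun t => -(2*t*(gradient w0 (t • x) 2)
          + t^2 * ((fderiv ℝ (gradient w0) (t • x)) x 2))) (Set.uIcc 0 1) := by
      intro t ht
      rw [Set.uIcc_of_le zero_le_one] at ht
      have htr0 := htr _ (hxt t ht)
      have hdec := clm_decomp (fderiv ℝ (gradient w0) (t • x)) x 2
      simp only [hexp, cross3_c0, cross3_c1, cross3_c2, E3_00, E3_01, E3_02, E3_10, E3_11,
        E3_12, E3_20, E3_21, E3_22, hdec]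
      linear_combination (t^2 * x 2) * htr0
    rw [intervalIntegral.integral_congr hcong, intervalIntegral.integral_neg, hFTC 2]
  -- relating the gradient components with partial derivatives
  have hpG : ∀ a : Fin 3, fderiv ℝ w0 x (E3 a) = gradient w0 x a := by
    intro a
    rw [apply_eq_inner (gradient w0 x) a, hGJ, J_apply]
    exact (InnerProductSpace.toDual_symm_apply).symm
  -- assemble the quaternion identity
  have hw0x : HasFDerivAt w0 (fderiv ℝ w0 x) x := hw0diff x hx
  have hQ : HasFDerivAt (fun y => ((w0 y : ℝ) : Quaternion ℝ) + quatVec (Uop w0 y))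
      ((coeQL.comp (fderiv ℝ w0 x)) + (quatVecL.comp L)) x :=
    (coeQL.hasFDerivAt.comp x hw0x).add (quatVecL.hasFDerivAt.comp x hUx)
  unfold MT
  rw [hQ.fderiv, Fin.sum_univ_three]
  have hD : ∀ i : Fin 3, ((coeQL.comp (fderiv ℝ w0 x)) + (quatVecL.comp L)) (E3 i)
      = coeQL (fderiv ℝ w0 x (E3 i)) + quatVecL (L (E3 i)) := fun i => rfl
  show quatVec (E3 0) * _ + quatVec (E3 1) * _ + quatVec (E3 2) * _ = 0
  rw [hD 0, hD 1, hD 2, coeQL_apply, coeQL_apply, coeQL_apply,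
    quatVecL_apply, quatVecL_apply, quatVecL_apply]
  ext <;>
    simp [Quaternion.re_zero, Quaternion.imI_zero, Quaternion.imJ_zero, Quaternion.imK_zero, Quaternion.re_mul, Quaternion.imI_mul, Quaternion.imJ_mul, Quaternion.imK_mul] <;>
    linarith [factdiv, fact0, fact1, fact2, hpG 0, hpG 1, hpG 2]
end
end

section
/- Let Ω ⊆ ℝ³ be open and star-shaped with respect to the origin, and let u_0 : Ω → ℝ be harmonic. Then the monogenic completion operator satisfies \vec{U}[u_0](x) = curl ∫₀¹ (t|x|²/2) ∇u_0(tx) dt, where \vec{U}[u_0](x) = ∫₀¹ t x × ∇u_0(tx) dt. -/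
open MeasureTheory Real
open scoped ENNReal

noncomputable section

/-- Component of the gradient in Euclidean space. -/
private lemma fderiv_gradient_apply (f : V3 → ℝ) (p v : V3) (j : Fin 3) :
    fderiv ℝ (gradient f) p v j = fderiv ℝ (fderiv ℝ f) p v (EuclideanSpace.single j 1) := by
  have hg : gradient f = (InnerProductSpace.toDual ℝ V3).symm ∘ (fderiv ℝ f) := rfl
  rw [hg, LinearIsometryEquiv.comp_fderiv]
  simp only [ContinuousLinearMap.coe_comp', Function.comp_apply, LinearIsometryEquiv.coe_coe]
  set L : V3 →L[ℝ] ℝ := fderiv ℝ (fderiv ℝ f) p v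
  have h2 : ((InnerProductSpace.toDual ℝ V3).symm L) j
      = (inner ℝ ((InnerProductSpace.toDual ℝ V3).symm L) (EuclideanSpace.single j (1:ℝ)) : ℝ) := by
    rw [real_inner_comm]
    simp [EuclideanSpace.inner_single_left]
  show ((InnerProductSpace.toDual ℝ V3).symm L) j = L (EuclideanSpace.single j 1)
  rw [h2, InnerProductSpace.toDual_symm_apply]

set_option maxHeartbeats 1000000 in
/-- For Ω open, star-shaped w.r.t. the origin, and u₀ harmonic in Ω,
U[u₀](x) = curl ∫₀¹ (t|x|²/2) ∇u₀(tx) dt. -/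
theorem stmt3 (Ω : Set V3) (hΩ : IsOpen Ω) (hstar : StarShaped0 Ω)
    (u0 : V3 → ℝ) (hsm : ContDiffOn ℝ 2 u0 Ω) (hharm : ∀ x ∈ Ω, lap3 u0 x = 0) :
    ∀ x ∈ Ω, Uop u0 x =
      curl3 (fun y => ∫ t in (0:ℝ)..1, (t * ‖y‖ ^ 2 / 2) • gradient u0 (t • y)) x := by
  -- auxiliary notation
  classical
  intro x hx
  set g : V3 → V3 := gradient u0 with hgdef
  -- basic regularity of g on Ω
  have hg1 : ContDiffOn ℝ 1 g Ω := by
    have h1 : ContDiffOn ℝ 1 (fderiv ℝ u0) Ω := hsm.fderiv_of_isOpen hΩ (by norm_num)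
    exact (InnerProductSpace.toDual ℝ V3).symm.contDiff.comp_contDiffOn h1
  have hgc : ContinuousOn g Ω := hg1.continuousOn
  have hg'c : ContinuousOn (fderiv ℝ g) Ω := hg1.continuousOn_fderiv_of_isOpen hΩ le_rfl
  have hgd : ∀ p ∈ Ω, DifferentiableAt ℝ g p := fun p hp =>
    (hg1.contDiffAt (hΩ.mem_nhds hp)).differentiableAt one_ne_zero
  -- choose a closed ball around x inside Ω
  obtain ⟨ε, εpos, hball⟩ : ∃ ε > 0, Metric.closedBall x ε ⊆ Ω :=
    (Metric.nhds_basis_closedBall.mem_iff.1 (hΩ.mem_nhds hx))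
  -- the compact set swept by segments
  set K : Set V3 := (fun p : ℝ × V3 => p.1 • p.2) '' (Set.Icc (0:ℝ) 1 ×ˢ Metric.closedBall x ε)
    with hKdef
  have hKcomp : IsCompact K :=
    (isCompact_Icc.prod (isCompact_closedBall _ _)).image (by fun_prop)
  have hKΩ : K ⊆ Ω := by
    rintro _ ⟨⟨t, y⟩, ⟨ht, hy⟩, rfl⟩
    exact hstar y (hball hy) t ht
  have hmemK : ∀ t ∈ Set.Icc (0:ℝ) 1, ∀ y ∈ Metric.closedBall x ε, t • y ∈ K := by
    intro t ht y hy
    exact ⟨(t, y), ⟨ht, hy⟩, rfl⟩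
  have hmemΩ : ∀ t ∈ Set.Icc (0:ℝ) 1, ∀ y ∈ Metric.closedBall x ε, t • y ∈ Ω :=
    fun t ht y hy => hKΩ (hmemK t ht y hy)
  -- bounds on g and its derivative on K
  obtain ⟨M1, hM1⟩ := hKcomp.exists_bound_of_continuousOn (hgc.mono hKΩ)
  obtain ⟨M2, hM2⟩ := hKcomp.exists_bound_of_continuousOn (hg'c.mono hKΩ)
  set R : ℝ := ‖x‖ + ε with hRdef
  have hRpos : 0 < R := by positivity
  have hynorm : ∀ y ∈ Metric.closedBall x ε, ‖y‖ ≤ R := by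
    intro y hy
    have := mem_closedBall_iff_norm.1 hy
    calc ‖y‖ = ‖x + (y - x)‖ := by rw [show x + (y - x) = y by abel]
      _ ≤ ‖x‖ + ‖y - x‖ := norm_add_le _ _
      _ ≤ ‖x‖ + ε := by linarith
  -- the parametric family and its derivative
  set F : V3 → ℝ → V3 := fun y t => (t * ‖y‖ ^ 2 / 2) • g (t • y) with hFdef
  set F' : V3 → ℝ → (V3 →L[ℝ] V3) := fun y t =>
    (t * ‖y‖ ^ 2 / 2) • ((fderiv ℝ g (t • y)).comp (t • ContinuousLinearMap.id ℝ V3)) +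
    ((t/2) • (2 • innerSL ℝ y)).smulRight (g (t • y)) with hF'def
  -- differentiability of F in y
  have hdiff : ∀ t ∈ Set.Icc (0:ℝ) 1, ∀ y ∈ Metric.closedBall x ε,
      HasFDerivAt (fun z => F z t) (F' y t) y := by
    intro t ht y hy
    have hty : t • y ∈ Ω := hmemΩ t ht y hy
    have hc : HasFDerivAt (fun z : V3 => t * ‖z‖ ^ 2 / 2) ((t/2) • (2 • innerSL ℝ y)) y := by
      have h0 : HasFDerivAt (fun z : V3 => ‖z‖ ^ 2) (2 • innerSL ℝ y) y :=
        (hasStrictFDerivAt_norm_sq y).hasFDerivAt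
      have h1 := h0.const_mul (t/2)
      have : (fun z : V3 => t * ‖z‖ ^ 2 / 2) = (fun z : V3 => (t/2) * ‖z‖ ^ 2) := by
        funext z; ring
      rw [this]
      exact h1
    have hs : HasFDerivAt (fun z : V3 => t • z) (t • ContinuousLinearMap.id ℝ V3) y :=
      (hasFDerivAt_id y).const_smul t
    have hf : HasFDerivAt (fun z : V3 => g (t • z))
        ((fderiv ℝ g (t • y)).comp (t • ContinuousLinearMap.id ℝ V3)) y :=
      ((hgd _ hty).hasFDerivAt).comp y hs
    exact hc.smul hf

  -- continuity in t statements
  have hsmulcont : ∀ y : V3, Continuous (fun t : ℝ => t • y) := by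
    intro y; fun_prop
  have hFcont : ∀ y ∈ Metric.closedBall x ε, ContinuousOn (fun t => F y t) (Set.Icc (0:ℝ) 1) := by
    intro y hy
    refine ContinuousOn.smul (f := fun t : ℝ => t * ‖y‖ ^ 2 / 2) (g := fun t => g (t • y)) (s := Set.Icc (0:ℝ) 1) (by fun_prop) ?_
    exact (hgc.comp (hsmulcont y).continuousOn (fun t ht => hmemΩ t ht y hy))
  have hxball : x ∈ Metric.closedBall x ε := Metric.mem_closedBall_self εpos.le
  have hgt : ContinuousOn (fun t : ℝ => g (t • x)) (Set.Icc (0:ℝ) 1) :=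
    hgc.comp (hsmulcont x).continuousOn (fun t ht => hmemΩ t ht x hxball)
  have hF'cont : ContinuousOn (fun t => F' x t) (Set.Icc (0:ℝ) 1) := by
    apply ContinuousOn.add
    · refine ContinuousOn.smul (f := fun t : ℝ => t * ‖x‖ ^ 2 / 2)
        (g := fun t : ℝ => (fderiv ℝ g (t • x)).comp (t • ContinuousLinearMap.id ℝ V3)) (s := Set.Icc (0:ℝ) 1) (by fun_prop) ?_
      have h1 : ContinuousOn (fun t : ℝ => fderiv ℝ g (t • x)) (Set.Icc (0:ℝ) 1) :=
        hg'c.comp (hsmulcont x).continuousOn (fun t ht => hmemΩ t ht x hxball)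
      have h2 : Continuous (fun t : ℝ => t • ContinuousLinearMap.id ℝ V3) :=
        continuous_id.smul continuous_const
      exact h1.clm_comp h2.continuousOn
    · have hcL : Continuous (fun t : ℝ => ContinuousLinearMap.smulRightL ℝ V3 V3
          ((t/2) • (2 • innerSL ℝ x))) := by
        apply (ContinuousLinearMap.smulRightL ℝ V3 V3).continuous.comp
        exact (continuous_id.div_const 2).smul continuous_const
      exact hcL.continuousOn.clm_apply hgt
  -- differentiation under the integral sign
  have key : HasFDerivAt (fun y => ∫ t in (0:ℝ)..1, F y t)
      (∫ t in (0:ℝ)..1, F' x t) x := by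
    have hIoc : Set.uIoc (0:ℝ) 1 = Set.Ioc (0:ℝ) 1 := Set.uIoc_of_le zero_le_one
    apply intervalIntegral.hasFDerivAt_integral_of_dominated_of_fderiv_le
      (bound := fun _ => R ^ 2 / 2 * |M2| + R * |M1|) (Metric.ball_mem_nhds x εpos)
    · filter_upwards [Metric.closedBall_mem_nhds x εpos] with y hy
      rw [hIoc]
      exact ((hFcont y hy).mono Set.Ioc_subset_Icc_self).aestronglyMeasurable measurableSet_Ioc
    · exact ((hFcont x hxball).mono (by rw [Set.uIcc_of_le zero_le_one])).intervalIntegrable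
    · rw [hIoc]
      exact (hF'cont.mono Set.Ioc_subset_Icc_self).aestronglyMeasurable measurableSet_Ioc
    · apply Filter.Eventually.of_forall
      intro t ht y hy
      have ht' : t ∈ Set.Icc (0:ℝ) 1 := Set.mem_Icc_of_Ioc (hIoc ▸ ht)
      have hy' : y ∈ Metric.closedBall x ε := Metric.ball_subset_closedBall hy
      have htyK : t • y ∈ K := hmemK t ht' y hy'
      have hb1 : ‖g (t • y)‖ ≤ |M1| := (hM1 _ htyK).trans (le_abs_self M1)
      have hb2 : ‖fderiv ℝ g (t • y)‖ ≤ |M2| := (hM2 _ htyK).trans (le_abs_self M2)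
      have hyR : ‖y‖ ≤ R := hynorm y hy'
      have ht0 : 0 ≤ t := ht'.1
      have ht1 : t ≤ 1 := ht'.2
      have hids : ‖t • ContinuousLinearMap.id ℝ V3‖ ≤ |t| := by
        calc ‖t • ContinuousLinearMap.id ℝ V3‖ ≤ ‖t‖ * ‖ContinuousLinearMap.id ℝ V3‖ :=
              ContinuousLinearMap.opNorm_smul_le _ _
          _ ≤ |t| * 1 := by
              rw [Real.norm_eq_abs]
              exact mul_le_mul_of_nonneg_left ContinuousLinearMap.norm_id_le (abs_nonneg t)
          _ = |t| := mul_one _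
      have htabs : |t| ≤ 1 := by rw [abs_of_nonneg ht0]; exact ht1
      have hcomp : ‖(fderiv ℝ g (t • y)).comp (t • ContinuousLinearMap.id ℝ V3)‖ ≤ |M2| := by
        refine le_trans (ContinuousLinearMap.opNorm_comp_le _ _) ?_
        nlinarith [norm_nonneg (fderiv ℝ g (t • y)), abs_nonneg t,
          norm_nonneg (t • ContinuousLinearMap.id ℝ V3), abs_nonneg M2]
      have habs : ‖t * ‖y‖ ^ 2 / 2‖ ≤ R ^ 2 / 2 := by
        rw [Real.norm_eq_abs, abs_of_nonneg (by positivity)]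
        nlinarith [norm_nonneg y]
      have h1 : ‖(t * ‖y‖ ^ 2 / 2) •
          ((fderiv ℝ g (t • y)).comp (t • ContinuousLinearMap.id ℝ V3))‖ ≤ R ^ 2 / 2 * |M2| := by
        calc ‖(t * ‖y‖ ^ 2 / 2) •
              ((fderiv ℝ g (t • y)).comp (t • ContinuousLinearMap.id ℝ V3))‖
            ≤ ‖t * ‖y‖ ^ 2 / 2‖ * ‖(fderiv ℝ g (t • y)).comp (t • ContinuousLinearMap.id ℝ V3)‖ :=
              ContinuousLinearMap.opNorm_smul_le _ _
          _ ≤ R ^ 2 / 2 * |M2| := mul_le_mul habs hcomp (norm_nonneg _) (by positivity)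
      have hinner : ((t/2) • (2 • innerSL ℝ y)) = innerSL ℝ (t • y) := by
        ext v
        simp [two_smul, real_inner_smul_left, inner_add_left]
        ring
      have h2 : ‖((t/2) • (2 • innerSL ℝ y)).smulRight (g (t • y))‖ ≤ R * |M1| := by
        rw [hinner]
        calc ‖(innerSL ℝ (t • y)).smulRight (g (t • y))‖
            = ‖innerSL ℝ (t • y)‖ * ‖g (t • y)‖ :=
              ContinuousLinearMap.norm_smulRight_apply _ _
          _ = ‖t • y‖ * ‖g (t • y)‖ := by rw [innerSL_apply_norm]
          _ ≤ R * |M1| := by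
              refine mul_le_mul ?_ hb1 (norm_nonneg _) (by positivity)
              calc ‖t • y‖ ≤ ‖t‖ * ‖y‖ := norm_smul_le _ _
                _ ≤ R := by rw [Real.norm_eq_abs]; nlinarith [norm_nonneg y, abs_nonneg t]
      calc ‖F' y t‖ ≤ ‖(t * ‖y‖ ^ 2 / 2) •
            ((fderiv ℝ g (t • y)).comp (t • ContinuousLinearMap.id ℝ V3))‖ +
            ‖((t/2) • (2 • innerSL ℝ y)).smulRight (g (t • y))‖ := norm_add_le _ _
        _ ≤ R ^ 2 / 2 * |M2| + R * |M1| := add_le_add h1 h2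

    · exact intervalIntegrable_const
    · apply Filter.Eventually.of_forall
      intro t ht y hy
      have ht' : t ∈ Set.Icc (0:ℝ) 1 := Set.mem_Icc_of_Ioc (hIoc ▸ ht)
      exact hdiff t ht' y (Metric.ball_subset_closedBall hy)
  -- the right-hand side vector field
  set w : V3 → V3 := fun y => ∫ t in (0:ℝ)..1, (t * ‖y‖ ^ 2 / 2) • g (t • y) with hwdef
  set L : V3 →L[ℝ] V3 := ∫ t in (0:ℝ)..1, F' x t with hLdef
  have hw : HasFDerivAt w L x := key
  set e : Fin 3 → V3 := fun i => EuclideanSpace.single i 1 with hedef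
  have huIcc : Set.uIcc (0:ℝ) 1 = Set.Icc (0:ℝ) 1 := Set.uIcc_of_le zero_le_one
  have hFint' : IntervalIntegrable (fun t => F' x t) MeasureTheory.volume 0 1 :=
    (hF'cont.mono (by rw [huIcc])).intervalIntegrable
  -- derivative components
  have hpd : ∀ i j : Fin 3, pd i (fun y => w y j) x = L (e i) j := by
    intro i j
    have hj0 := (EuclideanSpace.proj (𝕜 := ℝ) (ι := Fin 3) j).hasFDerivAt.comp x hw
    have hj : HasFDerivAt (fun y => w y j) ((EuclideanSpace.proj (𝕜 := ℝ) j).comp L) x :=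
      hj0.congr_of_eventuallyEq (Filter.Eventually.of_forall fun y => rfl)
    show fderiv ℝ (fun y => w y j) x (e i) = L (e i) j
    rw [hj.fderiv]
    rfl
  -- integrability of the applied derivative family
  have happint : ∀ i j : Fin 3,
      IntervalIntegrable (fun t => (F' x t (e i)) j) MeasureTheory.volume 0 1 := by
    intro i j
    have h1 : ContinuousOn (fun t => F' x t (e i)) (Set.Icc (0:ℝ) 1) :=
      hF'cont.clm_apply continuousOn_const
    exact (((EuclideanSpace.proj j).continuous.comp_continuousOn h1).mono
      (by rw [huIcc])).intervalIntegrable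
  have hLie : ∀ i j : Fin 3, L (e i) j = ∫ t in (0:ℝ)..1, (F' x t (e i)) j := by
    intro i j
    have h1 : L (e i) = ∫ t in (0:ℝ)..1, F' x t (e i) :=
      ContinuousLinearMap.intervalIntegral_apply hFint' (e i)
    have h2 : ContinuousOn (fun t => F' x t (e i)) (Set.Icc (0:ℝ) 1) :=
      hF'cont.clm_apply continuousOn_const
    have h3 : IntervalIntegrable (fun t => F' x t (e i)) MeasureTheory.volume 0 1 :=
      (h2.mono (by rw [huIcc])).intervalIntegrable
    have h4 := (EuclideanSpace.proj (𝕜 := ℝ) j).intervalIntegral_comp_comm h3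
    rw [h1]
    exact h4.symm
  -- explicit formula for the applied derivative
  have hPij : ∀ i j : Fin 3, ∀ t : ℝ, (F' x t (e i)) j
      = (t * ‖x‖ ^ 2 / 2) * (t * (fderiv ℝ g (t • x) (e i) j)) + (t * x i) * (g (t • x) j) := by
    intro i j t
    show ((t * ‖x‖ ^ 2 / 2) • ((fderiv ℝ g (t • x)).comp (t • ContinuousLinearMap.id ℝ V3)) +
      ((t/2) • (2 • innerSL ℝ x)).smulRight (g (t • x))) (e i) j
      = (t * ‖x‖ ^ 2 / 2) * (t * (fderiv ℝ g (t • x) (e i) j)) + (t * x i) * (g (t • x) j)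
    simp only [ContinuousLinearMap.add_apply, ContinuousLinearMap.coe_smul',
      Pi.smul_apply, ContinuousLinearMap.coe_comp', Function.comp_apply,
      ContinuousLinearMap.smulRight_apply, ContinuousLinearMap.coe_id',
      ContinuousLinearMap.smul_apply, two_smul, ContinuousLinearMap.add_apply,
      innerSL_apply_apply, _root_.map_smul, id_eq, PiLp.add_apply, PiLp.smul_apply, smul_eq_mul]
    have hxi : (inner ℝ x (e i) : ℝ) = x i := by
      simp [hedef, EuclideanSpace.inner_single_right]
    rw [hxi]
    ring
  -- symmetry of the second derivatives on Ω
  have hsymm : ∀ t ∈ Set.uIcc (0:ℝ) 1, ∀ i j : Fin 3,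
      fderiv ℝ g (t • x) (e i) j = fderiv ℝ g (t • x) (e j) i := by
    intro t ht i j
    rw [huIcc] at ht
    have htΩ : t • x ∈ Ω := hmemΩ t ht x hxball
    have hsym := (hsm.contDiffAt (hΩ.mem_nhds htΩ)).isSymmSndFDerivAt (by simp)
    calc fderiv ℝ g (t • x) (e i) j
        = fderiv ℝ (fderiv ℝ u0) (t • x) (e i) (EuclideanSpace.single j 1) :=
          fderiv_gradient_apply u0 (t • x) (e i) j
      _ = fderiv ℝ (fderiv ℝ u0) (t • x) (e j) (EuclideanSpace.single i 1) := by
          show fderiv ℝ (fderiv ℝ u0) (t • x) (e i) (e j)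
            = fderiv ℝ (fderiv ℝ u0) (t • x) (e j) (e i)
          exact hsym (e i) (e j)
      _ = fderiv ℝ g (t • x) (e j) i := (fderiv_gradient_apply u0 (t • x) (e j) i).symm
  -- key component identity
  have hcomp : ∀ i j : Fin 3, L (e i) j - L (e j) i
      = ∫ t in (0:ℝ)..1, ((t * x i) * (g (t • x) j) - (t * x j) * (g (t • x) i)) := by
    intro i j
    rw [hLie i j, hLie j i, ← intervalIntegral.integral_sub (happint i j) (happint j i)]
    apply intervalIntegral.integral_congr
    intro t ht
    have hs := hsymm t ht i j
    simp only [hPij i j t, hPij j i t, hs]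
    ring
  -- the Uop side, componentwise
  have hcrosscont : ContinuousOn (fun t => cross3 (t • x) (g (t • x))) (Set.Icc (0:ℝ) 1) := by
    apply ContinuousOn.comp (PiLp.continuous_toLp 2 (fun _ : Fin 3 => ℝ)).continuousOn
      _ (Set.mapsTo_univ _ _)
    apply continuousOn_pi.2
    intro i
    have hcomp : ∀ m : Fin 3, ContinuousOn (fun t : ℝ => g (t • x) m) (Set.Icc (0:ℝ) 1) :=
      fun m => (EuclideanSpace.proj (𝕜 := ℝ) m).continuous.comp_continuousOn hgt
    have hsm : ∀ m : Fin 3, ContinuousOn (fun t : ℝ => (t • x) m) (Set.Icc (0:ℝ) 1) := by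
      intro m
      have : (fun t : ℝ => (t • x) m) = fun t : ℝ => t * x m := by
        funext t; rfl
      rw [this]; fun_prop
    fin_cases i <;>
      · simp only [cross3, vec3, Matrix.cons_val_zero, Matrix.cons_val_one, Matrix.head_cons,
          Matrix.cons_val_two, Matrix.tail_cons]
        exact ((hsm _).mul (hcomp _)).sub ((hsm _).mul (hcomp _))
  have hcrossint : IntervalIntegrable (fun t => cross3 (t • x) (g (t • x)))
      MeasureTheory.volume 0 1 := (hcrosscont.mono (by rw [huIcc])).intervalIntegrable
  have hUk : ∀ k : Fin 3, Uop u0 x k = ∫ t in (0:ℝ)..1, (cross3 (t • x) (g (t • x))) k := by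
    intro k
    have := (EuclideanSpace.proj (𝕜 := ℝ) k).intervalIntegral_comp_comm hcrossint
    exact this.symm
  -- finish componentwise
  have hfinal : ∀ k i j : Fin 3,
      (∀ t : ℝ, (cross3 (t • x) (g (t • x))) k
        = (t * x i) * (g (t • x) j) - (t * x j) * (g (t • x) i)) →
      Uop u0 x k = L (e i) j - L (e j) i := by
    intro k i j hk
    rw [hUk k, hcomp i j]
    apply intervalIntegral.integral_congr
    intro t _
    exact hk t
  have hc0 : Uop u0 x 0 = L (e 1) 2 - L (e 2) 1 := by
    apply hfinal 0 1 2
    intro t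
    show (t • x) 1 * (g (t • x) 2) - (t • x) 2 * (g (t • x) 1) = _
    rfl
  have hc1 : Uop u0 x 1 = L (e 2) 0 - L (e 0) 2 := by
    apply hfinal 1 2 0
    intro t
    show (t • x) 2 * (g (t • x) 0) - (t • x) 0 * (g (t • x) 2) = _
    rfl
  have hc2 : Uop u0 x 2 = L (e 0) 1 - L (e 1) 0 := by
    apply hfinal 2 0 1
    intro t
    show (t • x) 0 * (g (t • x) 1) - (t • x) 1 * (g (t • x) 0) = _
    rfl
  ext k
  fin_cases k
  · show Uop u0 x 0 = (pd 1 (fun y => w y 2) x - pd 2 (fun y => w y 1) x)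
    rw [hpd 1 2, hpd 2 1, hc0]
  · show Uop u0 x 1 = (pd 2 (fun y => w y 0) x - pd 0 (fun y => w y 2) x)
    rw [hpd 2 0, hpd 0 2, hc1]
  · show Uop u0 x 2 = (pd 0 (fun y => w y 1) x - pd 1 (fun y => w y 0) x)
    rw [hpd 0 1, hpd 1 0, hc2]
end
end
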